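/- Let a, b ∈ ℝ³ be unit vectors. Then there exists an orthonormal basis (E₁, E₂, E₃, E₄) of ℝ⁴ with det[E₁ E₂ E₃ E₄] = 1 (a positively oriented orthonormal basis) such that K⁺(a)E₁ = E₂, K⁻(b)E₁ = E₂, K⁺(a)E₃ = E₄ and K⁻(b)E₃ = −E₄. In particular, setting P = K⁺(a)K⁻(b), one has PE₁ = −E₁, PE₂ = −E₂, PE₃ = E₃, PE₄ = E₄. -/

import Mathlib

open Matrix

/-- The matrix of `K_{s₁⁺}`: e₁↦e₂, e₂↦−e₁, e₃↦e₄, e₄↦−e₃. -/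
def J1p : Matrix (Fin 4) (Fin 4) ℝ := !![0,-1,0,0; 1,0,0,0; 0,0,0,-1; 0,0,1,0]
/-- The matrix of `K_{s₂⁺}`: e₁↦e₃, e₃↦−e₁, e₄↦e₂, e₂↦−e₄. -/
def J2p : Matrix (Fin 4) (Fin 4) ℝ := !![0,0,-1,0; 0,0,0,1; 1,0,0,0; 0,-1,0,0]
/-- The matrix of `K_{s₃⁺}`: e₁↦e₄, e₄↦−e₁, e₂↦e₃, e₃↦−e₂. -/
def J3p : Matrix (Fin 4) (Fin 4) ℝ := !![0,0,0,-1; 0,0,-1,0; 0,1,0,0; 1,0,0,0]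
/-- The matrix of `K_{s₁⁻}`: e₁↦e₂, e₂↦−e₁, e₃↦−e₄, e₄↦e₃. -/
def J1m : Matrix (Fin 4) (Fin 4) ℝ := !![0,-1,0,0; 1,0,0,0; 0,0,0,1; 0,0,-1,0]
/-- The matrix of `K_{s₂⁻}`: e₁↦e₃, e₃↦−e₁, e₄↦−e₂, e₂↦e₄. -/
def J2m : Matrix (Fin 4) (Fin 4) ℝ := !![0,0,-1,0; 0,0,0,-1; 1,0,0,0; 0,1,0,0]
/-- The matrix of `K_{s₃⁻}`: e₁↦e₄, e₄↦−e₁, e₂↦−e₃, e₃↦e₂. -/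
def J3m : Matrix (Fin 4) (Fin 4) ℝ := !![0,0,0,-1; 0,0,1,0; 0,-1,0,0; 1,0,0,0]

/-- `K⁺(a) = a₁J₁⁺ + a₂J₂⁺ + a₃J₃⁺`. -/
def Kp (a : Fin 3 → ℝ) : Matrix (Fin 4) (Fin 4) ℝ := a 0 • J1p + a 1 • J2p + a 2 • J3p
/-- `K⁻(a) = a₁J₁⁻ + a₂J₂⁻ + a₃J₃⁻`. -/
def Km (a : Fin 3 → ℝ) : Matrix (Fin 4) (Fin 4) ℝ := a 0 • J1m + a 1 • J2m + a 2 • J3m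

/-! `K⁺(a)` and `K⁻(b)` are commuting skew-symmetric complex structures, so `P = K⁺(a) K⁻(b)` is
a symmetric involution, and `tr P = 0` forces both eigenvalues `∓1` to occur. Since
`K⁺(a)` commutes with `P`, unit vectors `x` with `P x = -x` and `y` with `P y = y` give the
orthonormal frame `(x, K⁺x, y, K⁺y)`, and `K⁻ = -K⁺ P` gives `K⁻x = K⁺x`, `K⁻y = -K⁺y`. The frame
is positive because `K⁺(a)` is self-dual: `det (v, K⁺v, w, K⁺w) = |v ∧ w|² - ⟨K⁺v, w⟩²`. -/

section CommutingComplexStructures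

variable {R : Type*} [Ring R] {J K : R}

theorem mul_mul_self_eq_one_of_commute (hJ : J * J = -1) (hK : K * K = -1) (hJK : Commute J K) :
    J * K * (J * K) = 1 := by
  rw [hJK.symm.mul_mul_mul_comm, hJ, hK, neg_one_mul, neg_neg]

theorem commute_mul_left_of_commute (hJK : Commute J K) : Commute (J * K) J :=
  (Commute.refl J).mul_left hJK.symm

end CommutingComplexStructures

section RealMatrix

variable {n : Type*} [Fintype n]

theorem dotProduct_mulVec_self_eq_zero_of_transpose_eq_neg {M : Matrix n n ℝ} (hM : Mᵀ = -M)
    (x : n → ℝ) : x ⬝ᵥ (M *ᵥ x) = 0 := by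
  have h := dotProduct_transpose_mulVec M x x
  rw [hM, neg_mulVec, dotProduct_neg] at h
  linarith

theorem mulVec_dotProduct_mulVec_of_transpose_mul_self [DecidableEq n] {M : Matrix n n ℝ}
    (hM : Mᵀ * M = 1) (x y : n → ℝ) : (M *ᵥ x) ⬝ᵥ (M *ᵥ y) = x ⬝ᵥ y := by
  rw [← dotProduct_transpose_mulVec, mulVec_mulVec, hM, one_mulVec, dotProduct_comm]

theorem dotProduct_eq_zero_of_mulVec_eq_neg_of_mulVec_eq {P : Matrix n n ℝ} (hP : Pᵀ = P)
    {x y : n → ℝ} (hx : P *ᵥ x = -x) (hy : P *ᵥ y = y) : x ⬝ᵥ y = 0 := by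
  have h := dotProduct_transpose_mulVec P x y
  rw [hP, hy, hx, dotProduct_neg, dotProduct_comm y x] at h
  linarith

theorem inv_sqrt_smul_dotProduct_self_eq_one {x : n → ℝ} (hx : x ≠ 0) :
    ((√(x ⬝ᵥ x))⁻¹ • x) ⬝ᵥ ((√(x ⬝ᵥ x))⁻¹ • x) = 1 := by
  have hpos : 0 ≤ x ⬝ᵥ x := Fintype.sum_nonneg fun i => mul_self_nonneg (x i)
  rw [smul_dotProduct, dotProduct_smul, smul_eq_mul, smul_eq_mul, ← mul_assoc, ← mul_inv,
    Real.mul_self_sqrt hpos, inv_mul_cancel₀ (dotProduct_self_eq_zero.not.mpr hx)]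

theorem exists_dotProduct_self_eq_one_mulVec_eq_neg [DecidableEq n] {P : Matrix n n ℝ}
    (hP : P * P = 1) (hP1 : P ≠ 1) : ∃ x : n → ℝ, x ⬝ᵥ x = 1 ∧ P *ᵥ x = -x := by
  obtain ⟨w, hw⟩ : ∃ w, P *ᵥ w ≠ w := by
    by_contra! h
    exact hP1 (ext_iff_mulVec.mpr fun v => by rw [h, one_mulVec])
  have hv : P *ᵥ (P *ᵥ w - w) = -(P *ᵥ w - w) := by
    rw [mulVec_sub, mulVec_mulVec, hP, one_mulVec, neg_sub]
  refine ⟨_, inv_sqrt_smul_dotProduct_self_eq_one (sub_ne_zero.mpr hw), ?_⟩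
  rw [mulVec_smul, hv, smul_neg]

theorem ne_one_of_trace_eq_zero [DecidableEq n] [Nonempty n] {P : Matrix n n ℝ}
    (hP : P.trace = 0) : P ≠ 1 := by
  rintro rfl
  simp [trace_one] at hP

theorem transpose_mul_eq_of_commute {J K : Matrix n n ℝ} (hJ : Jᵀ = -J) (hK : Kᵀ = -K)
    (hJK : Commute J K) : (J * K)ᵀ = J * K := by
  rw [transpose_mul, hJ, hK, neg_mul_neg, hJK.eq]

theorem mulVec_eq_of_mul_mulVec_eq_neg [DecidableEq n] {J K : Matrix n n ℝ} (hJ : J * J = -1)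
    {x : n → ℝ} (hx : (J * K) *ᵥ x = -x) : K *ᵥ x = J *ᵥ x := by
  have h := congrArg (J *ᵥ ·) hx
  simp only [mulVec_mulVec, ← mul_assoc, hJ, neg_mul, one_mul, neg_mulVec, mulVec_neg] at h
  exact neg_injective h

theorem mulVec_eq_neg_of_mul_mulVec_eq [DecidableEq n] {J K : Matrix n n ℝ} (hJ : J * J = -1)
    {x : n → ℝ} (hx : (J * K) *ᵥ x = x) : K *ᵥ x = -(J *ᵥ x) := by
  have h := congrArg (J *ᵥ ·) hx
  simp only [mulVec_mulVec, ← mul_assoc, hJ, neg_mul, one_mul, neg_mulVec] at h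
  rw [← h, neg_neg]

theorem mulVec_mulVec_comm {P J : Matrix n n ℝ} (h : Commute P J) (x : n → ℝ) :
    P *ᵥ (J *ᵥ x) = J *ᵥ (P *ᵥ x) := by
  rw [mulVec_mulVec, h.eq, ← mulVec_mulVec]

theorem dotProduct_frame_eq_ite [DecidableEq n] {J P : Matrix n n ℝ} (hJ : Jᵀ = -J)
    (hJ2 : J * J = -1) (hP : Pᵀ = P) {x y : n → ℝ} (hx : x ⬝ᵥ x = 1) (hy : y ⬝ᵥ y = 1)
    (hPx : P *ᵥ x = -x) (hPJx : P *ᵥ (J *ᵥ x) = -(J *ᵥ x))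
    (hPy : P *ᵥ y = y) (hPJy : P *ᵥ (J *ᵥ y) = J *ᵥ y) (i j : Fin 4) :
    ![x, J *ᵥ x, y, J *ᵥ y] i ⬝ᵥ ![x, J *ᵥ x, y, J *ᵥ y] j = if i = j then 1 else 0 := by
  have hJO : Jᵀ * J = 1 := by rw [hJ, neg_mul, hJ2, neg_neg]
  have h00 := hx
  have h11 := (mulVec_dotProduct_mulVec_of_transpose_mul_self hJO x x).trans hx
  have h22 := hy
  have h33 := (mulVec_dotProduct_mulVec_of_transpose_mul_self hJO y y).trans hy
  have h01 := dotProduct_mulVec_self_eq_zero_of_transpose_eq_neg hJ x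
  have h23 := dotProduct_mulVec_self_eq_zero_of_transpose_eq_neg hJ y
  have h02 := dotProduct_eq_zero_of_mulVec_eq_neg_of_mulVec_eq hP hPx hPy
  have h03 := dotProduct_eq_zero_of_mulVec_eq_neg_of_mulVec_eq hP hPx hPJy
  have h12 := dotProduct_eq_zero_of_mulVec_eq_neg_of_mulVec_eq hP hPJx hPy
  have h13 := dotProduct_eq_zero_of_mulVec_eq_neg_of_mulVec_eq hP hPJx hPJy
  fin_cases i <;> fin_cases j <;>
    simp [h00, h11, h22, h33, h01, h02, h03, h12, h13, h23, dotProduct_comm (J *ᵥ x) x,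
      dotProduct_comm y x, dotProduct_comm (J *ᵥ y) x, dotProduct_comm y (J *ᵥ x),
      dotProduct_comm (J *ᵥ y) (J *ᵥ x), dotProduct_comm (J *ᵥ y) y]

end RealMatrix

theorem Kp_eq (a : Fin 3 → ℝ) :
    Kp a = !![0, -a 0, -a 1, -a 2; a 0, 0, -a 2, a 1; a 1, a 2, 0, -a 0; a 2, -a 1, a 0, 0] := by
  ext i j
  fin_cases i <;> fin_cases j <;> simp [Kp, J1p, J2p, J3p]

theorem Km_eq (b : Fin 3 → ℝ) :
    Km b = !![0, -b 0, -b 1, -b 2; b 0, 0, b 2, -b 1; b 1, -b 2, 0, b 0; b 2, b 1, -b 0, 0] := by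
  ext i j
  fin_cases i <;> fin_cases j <;> simp [Km, J1m, J2m, J3m]

theorem transpose_Kp (a : Fin 3 → ℝ) : (Kp a)ᵀ = -Kp a := by
  rw [Kp_eq]; ext i j; fin_cases i <;> fin_cases j <;> simp

theorem transpose_Km (b : Fin 3 → ℝ) : (Km b)ᵀ = -Km b := by
  rw [Km_eq]; ext i j; fin_cases i <;> fin_cases j <;> simp

theorem Kp_mul_self (a : Fin 3 → ℝ) : Kp a * Kp a = -(a ⬝ᵥ a) • 1 := by
  rw [Kp_eq]; ext i j
  fin_cases i <;> fin_cases j <;>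
    simp [mul_apply, Fin.sum_univ_four, dotProduct, Fin.sum_univ_three] <;> ring

theorem Km_mul_self (b : Fin 3 → ℝ) : Km b * Km b = -(b ⬝ᵥ b) • 1 := by
  rw [Km_eq]; ext i j
  fin_cases i <;> fin_cases j <;>
    simp [mul_apply, Fin.sum_univ_four, dotProduct, Fin.sum_univ_three] <;> ring

theorem commute_Kp_Km (a b : Fin 3 → ℝ) : Commute (Kp a) (Km b) := by
  rw [Kp_eq, Km_eq, Commute, SemiconjBy]; ext i j
  fin_cases i <;> fin_cases j <;> simp [mul_apply, Fin.sum_univ_four] <;> ring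

theorem trace_Kp_mul_Km (a b : Fin 3 → ℝ) : (Kp a * Km b).trace = 0 := by
  rw [Kp_eq, Km_eq]
  simp [trace, Fin.sum_univ_four]
  ring

theorem det_Kp_frame (a : Fin 3 → ℝ) (x y : Fin 4 → ℝ) :
    (of fun i j => ![x, Kp a *ᵥ x, y, Kp a *ᵥ y] j i).det =
      (a ⬝ᵥ a) * ((x ⬝ᵥ x) * (y ⬝ᵥ y) - (x ⬝ᵥ y) ^ 2) - ((Kp a *ᵥ x) ⬝ᵥ y) ^ 2 := by
  rw [det_succ_row_zero]
  simp [Fin.sum_univ_succ, det_fin_three, Kp_eq, mulVec, dotProduct, Fin.succAbove]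
  ring

/-- For unit a, b ∈ ℝ³ there is a positively oriented orthonormal basis (E₁,E₂,E₃,E₄)
of ℝ⁴ with K⁺(a)E₁ = K⁻(b)E₁ = E₂, K⁺(a)E₃ = E₄, K⁻(b)E₃ = −E₄; in particular
P = K⁺(a)K⁻(b) satisfies PE₁ = −E₁, PE₂ = −E₂, PE₃ = E₃, PE₄ = E₄. -/
theorem stmt7 (a b : Fin 3 → ℝ) (ha : a ⬝ᵥ a = 1) (hb : b ⬝ᵥ b = 1) :
    ∃ E : Fin 4 → (Fin 4 → ℝ),
      (∀ i j, E i ⬝ᵥ E j = if i = j then 1 else 0) ∧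
      (Matrix.of fun i j => E j i).det = 1 ∧
      Kp a *ᵥ E 0 = E 1 ∧ Km b *ᵥ E 0 = E 1 ∧
      Kp a *ᵥ E 2 = E 3 ∧ Km b *ᵥ E 2 = -E 3 ∧
      (Kp a * Km b) *ᵥ E 0 = -E 0 ∧ (Kp a * Km b) *ᵥ E 1 = -E 1 ∧
      (Kp a * Km b) *ᵥ E 2 = E 2 ∧ (Kp a * Km b) *ᵥ E 3 = E 3 := by
  have hJ : Kp a * Kp a = -1 := by rw [Kp_mul_self, ha, neg_one_smul]
  have hK : Km b * Km b = -1 := by rw [Km_mul_self, hb, neg_one_smul]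
  have hP : (Kp a * Km b) * (Kp a * Km b) = 1 :=
    mul_mul_self_eq_one_of_commute hJ hK (commute_Kp_Km a b)
  have hPJ := commute_mul_left_of_commute (commute_Kp_Km a b)
  obtain ⟨x, hx, hPx⟩ := exists_dotProduct_self_eq_one_mulVec_eq_neg hP
    (ne_one_of_trace_eq_zero (trace_Kp_mul_Km a b))
  obtain ⟨y, hy, hPy⟩ := exists_dotProduct_self_eq_one_mulVec_eq_neg (P := -(Kp a * Km b))
    (by rwa [neg_mul_neg]) (ne_one_of_trace_eq_zero (by rw [trace_neg, trace_Kp_mul_Km, neg_zero]))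
  rw [neg_mulVec, neg_inj] at hPy
  have hPJx : (Kp a * Km b) *ᵥ (Kp a *ᵥ x) = -(Kp a *ᵥ x) := by
    rw [mulVec_mulVec_comm hPJ, hPx, mulVec_neg]
  have hPJy : (Kp a * Km b) *ᵥ (Kp a *ᵥ y) = Kp a *ᵥ y := by rw [mulVec_mulVec_comm hPJ, hPy]
  have hframe := dotProduct_frame_eq_ite (transpose_Kp a) hJ
    (transpose_mul_eq_of_commute (transpose_Kp a) (transpose_Km b) (commute_Kp_Km a b))
    hx hy hPx hPJx hPy hPJy
  refine ⟨![x, Kp a *ᵥ x, y, Kp a *ᵥ y], hframe, ?_, rfl, mulVec_eq_of_mul_mulVec_eq_neg hJ hPx,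
    rfl, mulVec_eq_neg_of_mul_mulVec_eq hJ hPy, hPx, hPJx, hPy, hPJy⟩
  have hxy : x ⬝ᵥ y = 0 := hframe 0 2
  have hJxy : (Kp a *ᵥ x) ⬝ᵥ y = 0 := hframe 1 2
  rw [det_Kp_frame, ha, hx, hy, hxy, hJxy]
  norm_num
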